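/- arXiv:2104.12450 — 4 statements merged into one kernel-verified Lean document; each statement's English description precedes it below -/
import Mathlib

section
/- Under the hypotheses of the metric amalgamation construction (clopen partition {B_i}, basepoints p_i ∈ B_i, metrics e_i on B_i, amalgamated metric D), if in addition for every i one has diam_d(B_i) ≤ ε and diam_{e_i}(B_i) ≤ ε, then sup_{x,y∈X} |D(x,y) − d(x,y)| ≤ 4ε. -/
open Set Topology

/-- `d` is a metric (as a two-variable real function) on the whole type `X`. -/
def IsMetricOn {X : Type*} (d : X → X → ℝ) : Prop :=
  (∀ x y, d x y = 0 ↔ x = y) ∧ (∀ x y, d x y = d y x) ∧ ∀ x y z, d x y ≤ d x z + d z y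

/-- The metric topology of `d` coincides with the given topology on `X`. -/
def GeneratesTopology {X : Type*} [TopologicalSpace X] (d : X → X → ℝ) : Prop :=
  ∀ s : Set X, IsOpen s ↔ ∀ x ∈ s, ∃ ε > 0, ∀ y, d x y < ε → y ∈ s

/-- `d` is a metric on the subset `A` of `X`. -/
def IsMetricOnSet {X : Type*} (A : Set X) (d : X → X → ℝ) : Prop :=
  (∀ x ∈ A, ∀ y ∈ A, (d x y = 0 ↔ x = y)) ∧ (∀ x ∈ A, ∀ y ∈ A, d x y = d y x) ∧
    ∀ x ∈ A, ∀ y ∈ A, ∀ z ∈ A, d x y ≤ d x z + d z y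

/-! Inside a block, `D` and `d` both lie in `[0, ε]`. Across blocks, `D x y` replaces `d x y` by
the detour `x → p i → p j → y`; by the triangle inequality `d (p i) (p j)` differs from `d x y` by at
most `d x (p i) + d y (p j) ≤ 2ε`, and the two `e`-legs add at most another `2ε`. -/

lemma IsMetricOn.nonneg {X : Type*} {d : X → X → ℝ} (hd : IsMetricOn d) (x y : X) :
    0 ≤ d x y := by
  obtain ⟨hd0, hsymm, htri⟩ := hd
  have := htri x x y
  rw [(hd0 x x).mpr rfl, hsymm y x] at this
  linarith

lemma IsMetricOnSet.nonneg {X : Type*} {A : Set X} {d : X → X → ℝ} (hd : IsMetricOnSet A d)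
    {x y : X} (hx : x ∈ A) (hy : y ∈ A) : 0 ≤ d x y := by
  obtain ⟨hd0, hsymm, htri⟩ := hd
  have := htri x hx x hx y hy
  rw [(hd0 x hx x hx).mpr rfl, hsymm y hy x hx] at this
  linarith

lemma IsMetricOn.abs_sub_le {X : Type*} {d : X → X → ℝ} (hd : IsMetricOn d) (x y p q : X) :
    |d p q - d x y| ≤ d x p + d y q := by
  obtain ⟨-, hsymm, htri⟩ := hd
  rw [abs_sub_le_iff]
  constructor
  · linarith [htri p q x, htri x q y, hsymm p x]
  · linarith [htri x y p, htri p y q, hsymm q y]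

lemma IsMetricOn.abs_add_detour_sub_le {X : Type*} {d : X → X → ℝ} (hd : IsMetricOn d)
    (x y p q : X) {a b : ℝ} (ha : 0 ≤ a) (hb : 0 ≤ b) :
    |a + d p q + b - d x y| ≤ a + b + (d x p + d y q) := by
  calc |a + d p q + b - d x y| = |(a + b) + (d p q - d x y)| := by ring_nf
    _ ≤ |a + b| + |d p q - d x y| := abs_add_le _ _
    _ ≤ a + b + (d x p + d y q) := by
      rw [abs_of_nonneg (add_nonneg ha hb)]
      exact add_le_add_right (hd.abs_sub_le x y p q) _

theorem metric_amalgamation_close_general {X : Type*} {I : Type*}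
    (d : X → X → ℝ) (hd : IsMetricOn d)
    (B : I → Set X)
    (p : I → X) (hp : ∀ i, p i ∈ B i)
    (e : I → (X → X → ℝ)) (he : ∀ i, IsMetricOnSet (B i) (e i))
    (ι : X → I) (hι : ∀ x, x ∈ B (ι x))
    (D : X → X → ℝ)
    (hDeq : ∀ x y, ι x = ι y → D x y = e (ι x) x y)
    (hDne : ∀ x y, ι x ≠ ι y →
      D x y = e (ι x) x (p (ι x)) + d (p (ι x)) (p (ι y)) + e (ι y) (p (ι y)) y)
    (ε : ℝ)
    (hdiamd : ∀ i, ∀ x ∈ B i, ∀ y ∈ B i, d x y ≤ ε)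
    (hdiame : ∀ i, ∀ x ∈ B i, ∀ y ∈ B i, e i x y ≤ ε) :
    ∀ x y, |D x y - d x y| ≤ 4 * ε := by
  intro x y
  rcases eq_or_ne (ι x) (ι y) with hxy | hxy
  · have hy : y ∈ B (ι x) := hxy ▸ hι y
    have hdε : d x y ≤ ε := hdiamd _ x (hι x) y hy
    rw [hDeq x y hxy]
    calc |e (ι x) x y - d x y| ≤ ε :=
          abs_sub_le_of_nonneg_of_le ((he _).nonneg (hι x) hy) (hdiame _ x (hι x) y hy)
            (hd.nonneg x y) hdε
      _ ≤ 4 * ε := by linarith [hd.nonneg x y]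
  · rw [hDne x y hxy]
    refine (hd.abs_add_detour_sub_le x y _ _ ((he _).nonneg (hι x) (hp _))
      ((he _).nonneg (hp _) (hι y))).trans ?_
    linarith [hdiame _ x (hι x) _ (hp _), hdiame _ _ (hp _) y (hι y),
      hdiamd _ x (hι x) _ (hp _), hdiamd _ y (hι y) _ (hp _)]

/-- If every block has `d`-diameter and `e i`-diameter at most `ε`, then the
amalgamated metric `D` is uniformly `4ε`-close to `d`. -/
theorem metric_amalgamation_close {X : Type*} [TopologicalSpace X] {I : Type*}
    (d : X → X → ℝ) (hd : IsMetricOn d)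
    (B : I → Set X) (hBclopen : ∀ i, IsClopen (B i))
    (hdisj : ∀ i j, i ≠ j → Disjoint (B i) (B j)) (hcover : ⋃ i, B i = univ)
    (p : I → X) (hp : ∀ i, p i ∈ B i)
    (e : I → (X → X → ℝ)) (he : ∀ i, IsMetricOnSet (B i) (e i))
    (ι : X → I) (hι : ∀ x, x ∈ B (ι x))
    (D : X → X → ℝ)
    (hDeq : ∀ x y, ι x = ι y → D x y = e (ι x) x y)
    (hDne : ∀ x y, ι x ≠ ι y →
      D x y = e (ι x) x (p (ι x)) + d (p (ι x)) (p (ι y)) + e (ι y) (p (ι y)) y)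
    (ε : ℝ)
    (hdiamd : ∀ i, ∀ x ∈ B i, ∀ y ∈ B i, d x y ≤ ε)
    (hdiame : ∀ i, ∀ x ∈ B i, ∀ y ∈ B i, e i x y ≤ ε) :
    ∀ x y, |D x y - d x y| ≤ 4 * ε :=
  metric_amalgamation_close_general d hd B p hp e he ι hι D hDeq hDne ε hdiamd hdiame
end

section
/- Let X be a compact finite-dimensional metrizable space. Then for every metric d ∈ Met(X) and every ε > 0, there exists a metric D ∈ Met(X) with sup_{x,y}|D(x,y) − d(x,y)| < 4ε such that (X, D) embeds isometrically into some ℝ^N equipped with the ℓ^∞ norm. In particular, the set of metrics isometrically embeddable into a finite-dimensional ℓ^∞ space is dense in (Met(X), 𝒟_X). -/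
/-
Take an `ε`-net `e₁, …, e_K` of `(X, d)`. The map `x ↦ (d(x, eᵢ))ᵢ` into `ℓ^∞_K` is 1-Lipschitz
and shrinks distances by at most `2ε`, but need not be injective. Appending a copy of a
Menger–Nöbeling embedding `X ↪ ℝ^(2n+1)` scaled to diameter `≤ ε` makes it a topological
embedding while changing sup-distances by at most `ε`; `D` is the pulled-back `ℓ^∞` metric.

The embedding comes from Baire category in `C(X, ℝ^(2n+1))`. Maps `x ↦ ∑ ρᵢ(x) pᵢ`, built from a
partition of unity `ρ` of order `≤ n + 1` subordinate to a fine cover and vertices `pᵢ` in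
general position, are dense, and their fibres are small: two convex combinations supported on
`n + 1` vertices each involve at most `2n + 2` points of `ℝ^(2n+1)`, which are affinely
independent, so they agree only if their weights do.
-/

open Set Topology

/-- The covering dimension of `X` is at most `n`: every open cover admits an open
refinement that still covers and has order at most `n + 1`. -/
def CovDimLE (X : Type*) [TopologicalSpace X] (n : ℕ) : Prop :=
  ∀ 𝒰 : Set (Set X), (∀ U ∈ 𝒰, IsOpen U) → ⋃₀ 𝒰 = univ →
    ∃ 𝒱 : Set (Set X), (∀ V ∈ 𝒱, IsOpen V) ∧ ⋃₀ 𝒱 = univ ∧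
      (∀ V ∈ 𝒱, ∃ U ∈ 𝒰, V ⊆ U) ∧
      ∀ x : X, {V | V ∈ 𝒱 ∧ x ∈ V}.encard ≤ (n : ℕ∞) + 1

open Function MeasureTheory Module
open scoped Finset

section GeneralPosition

variable {E : Type*} [NormedAddCommGroup E] [NormedSpace ℝ E]

/-- Every `finrank ℝ E + 1` of the points are affinely independent, phrased through affine
relations `∑ i, w i • p i = 0`, `∑ i, w i = 0` supported on at most that many indices. -/
def InGeneralPosition {ι : Type*} [Fintype ι] (p : ι → E) : Prop :=
  ∀ w : ι → ℝ, #{i | w i ≠ 0} ≤ finrank ℝ E + 1 → ∑ i, w i = 0 → ∑ i, w i • p i = 0 → w = 0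

theorem affineSpan_image_ne_top {ι : Type*} (p : ι → E) {s : Finset ι}
    (hs : #s ≤ finrank ℝ E) : affineSpan ℝ (p '' s) ≠ ⊤ := by
  classical
  rcases s.eq_empty_or_nonempty with rfl | hne
  · simp
  obtain ⟨k, hk⟩ := Nat.exists_eq_succ_of_ne_zero hne.card_pos.ne'
  intro htop
  have hspan : vectorSpan ℝ (s.image p : Set E) = ⊤ := by
    rw [← direction_affineSpan, Finset.coe_image, htop, AffineSubspace.direction_top]
  have hle := finrank_vectorSpan_image_finset_le ℝ p s hk
  rw [hspan, finrank_top] at hle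
  omega

theorem InGeneralPosition.cons {K : ℕ} {p : Fin K → E} (hp : InGeneralPosition p) {q : E}
    (hq : ∀ s : Finset (Fin K), #s ≤ finrank ℝ E → q ∉ affineSpan ℝ (p '' s)) :
    InGeneralPosition (Fin.cons q p : Fin (K + 1) → E) := by
  intro w hcard hsum hsmul
  rw [Fin.card_filter_univ_succ] at hcard
  rw [Fin.sum_univ_succ] at hsum hsmul
  simp only [Fin.cons_zero, Fin.cons_succ] at hsmul
  by_cases h0 : w 0 = 0
  · have htail : (fun i : Fin K => w i.succ) = 0 := by
      refine hp _ ?_ (by simpa [h0] using hsum) (by simpa [h0] using hsmul)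
      simpa [h0] using hcard
    funext i
    cases i using Fin.cases with
    | zero => exact h0
    | succ j => exact congrFun htail j
  · exfalso
    set v : Fin K → ℝ := fun i => -w i.succ / w 0 with hv_def
    have hv : ∑ i, v i = 1 := by
      simp only [v, ← Finset.sum_div, Finset.sum_neg_distrib]
      rw [eq_neg_of_add_eq_zero_right hsum, neg_neg, div_self h0]
    have hqv : q = ∑ i, v i • p i := by
      have hwq : w 0 • q = -∑ i, w i.succ • p i := eq_neg_of_add_eq_zero_left hsmul
      calc q = (w 0)⁻¹ • (w 0 • q) := by rw [smul_smul, inv_mul_cancel₀ h0, one_smul]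
        _ = ∑ i, v i • p i := by
          rw [hwq, ← Finset.sum_neg_distrib, Finset.smul_sum]
          refine Finset.sum_congr rfl fun i _ => ?_
          rw [hv_def, smul_neg, smul_smul, ← neg_smul]
          ring_nf
    refine hq {i | w i.succ ≠ 0} ?_ ?_
    · simp only [h0, ne_eq, not_false_eq_true, if_true] at hcard ⊢
      omega
    rw [hqv, ← Finset.univ.affineCombination_eq_linear_combination p v hv]
    refine affineCombination_mem_affineSpan_image hv (fun i _ hi => ?_) p
    simp_all [v]

theorem exists_inGeneralPosition_near [FiniteDimensional ℝ E] {K : ℕ} (t : Fin K → E) {η : ℝ}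
    (hη : 0 < η) : ∃ p : Fin K → E, (∀ i, dist (p i) (t i) < η) ∧ InGeneralPosition p := by
  induction K with
  | zero => exact ⟨Fin.elim0, fun i => i.elim0, fun w _ _ _ => funext fun i => i.elim0⟩
  | succ K ih =>
    obtain ⟨p, hpt, hp⟩ := ih (fun i => t i.succ)
    borelize E
    set bad : Set E := ⋃ (s : Finset (Fin K)) (_ : #s ≤ finrank ℝ E), affineSpan ℝ (p '' s)
    have hbad : (Measure.addHaar : Measure E) bad = 0 :=
      measure_iUnion_null fun s => measure_iUnion_null fun hs =>
        Measure.addHaar_affineSubspace _ _ (affineSpan_image_ne_top p hs)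
    obtain ⟨q, hqt, hqbad⟩ : (Metric.ball (t 0) η \ bad).Nonempty :=
      nonempty_of_measure_ne_zero (μ := Measure.addHaar) <| by
        rw [measure_sdiff_null hbad]; exact (Metric.measure_ball_pos _ _ hη).ne'
    refine ⟨Fin.cons q p, fun i => ?_, hp.cons fun s hs hqs => hqbad ?_⟩
    · cases i using Fin.cases with
      | zero => exact hqt
      | succ j => exact hpt j
    · exact Set.mem_iUnion₂.mpr ⟨s, hs, hqs⟩

theorem InGeneralPosition.eq_of_sum_smul_eq {ι : Type*} [Fintype ι] {p : ι → E}
    (hp : InGeneralPosition p) {a b : ι → ℝ}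
    (hab : #{i | a i ≠ 0} + #{i | b i ≠ 0} ≤ finrank ℝ E + 1) (hsum : ∑ i, a i = ∑ i, b i)
    (hsmul : ∑ i, a i • p i = ∑ i, b i • p i) : a = b := by
  classical
  have hsupp : #{i | (a - b) i ≠ 0} ≤ #{i | a i ≠ 0} + #{i | b i ≠ 0} := by
    refine (Finset.card_le_card fun i => ?_).trans (Finset.card_union_le _ _)
    simp only [Finset.mem_filter, Finset.mem_union, Finset.mem_univ, true_and, Pi.sub_apply]
    contrapose!
    rintro ⟨ha, hb⟩
    rw [ha, hb, sub_zero]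
  refine sub_eq_zero.mp (hp _ (hsupp.trans hab) ?_ ?_)
  · simp [Finset.sum_sub_distrib, hsum]
  · simp [sub_smul, Finset.sum_sub_distrib, hsmul]

end GeneralPosition

theorem CovDimLE.exists_partitionOfUnity {Y : Type*} [TopologicalSpace Y] [CompactSpace Y]
    [NormalSpace Y] {n : ℕ} (hY : CovDimLE Y n) {𝒰 : Set (Set Y)} (h𝒰o : ∀ U ∈ 𝒰, IsOpen U)
    (h𝒰 : ⋃₀ 𝒰 = univ) :
    ∃ (K : ℕ) (ρ : PartitionOfUnity (Fin K) Y univ), (∀ i, ∃ U ∈ 𝒰, tsupport (ρ i) ⊆ U) ∧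
      ∀ x, #{i | ρ i x ≠ 0} ≤ n + 1 := by
  obtain ⟨𝒱, h𝒱o, h𝒱, h𝒱𝒰, h𝒱ord⟩ := hY 𝒰 h𝒰o h𝒰
  obtain ⟨𝒲, h𝒲𝒱, h𝒲fin, h𝒲⟩ := isCompact_univ.elim_finite_subcover_image (c := id)
    (fun V hV => h𝒱o V hV) (by rw [← h𝒱, sUnion_eq_biUnion]; exact subset_rfl)
  obtain ⟨K, V, hVinj, rfl⟩ := h𝒲fin.fin_param
  obtain ⟨ρ, hρV⟩ := PartitionOfUnity.exists_isSubordinate_of_locallyFinite isClosed_univ V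
    (fun i => h𝒱o _ (h𝒲𝒱 ⟨i, rfl⟩)) (locallyFinite_of_finite V) (by simpa using h𝒲)
  refine ⟨K, ρ, fun i => ?_, fun x => ?_⟩
  · obtain ⟨U, hU, hVU⟩ := h𝒱𝒰 _ (h𝒲𝒱 ⟨i, rfl⟩)
    exact ⟨U, hU, (hρV i).trans hVU⟩
  · have hmaps : V '' {i | ρ i x ≠ 0} ⊆ {W | W ∈ 𝒱 ∧ x ∈ W} := by
      rintro _ ⟨i, hi, rfl⟩
      exact ⟨h𝒲𝒱 ⟨i, rfl⟩, hρV i (subset_tsupport _ hi)⟩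
    have := (encard_mono hmaps).trans (h𝒱ord x)
    rw [hVinj.injOn.encard_image, ← Finset.coe_filter_univ, encard_coe_eq_coe_finsetCard] at this
    exact_mod_cast this

theorem isOpen_setOf_forall_le_dist_imp_ne {Y Z : Type*} [MetricSpace Y] [CompactSpace Y]
    [MetricSpace Z] (r : ℝ) : IsOpen {f : C(Y, Z) | ∀ x y, r ≤ dist x y → f x ≠ f y} := by
  refine Metric.isOpen_iff.mpr fun f hf => ?_
  obtain ⟨c, hc, hfc⟩ := (isClosed_le continuous_const continuous_dist).isCompact.exists_forall_le'
    (f := fun q : Y × Y => dist (f q.1) (f q.2)) (by fun_prop) (a := 0)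
    fun q hq => dist_pos.mpr (hf q.1 q.2 hq)
  refine ⟨c / 2, half_pos hc, fun g hg x y hxy hgxy => ?_⟩
  have hgf : dist g f < c / 2 := hg
  refine lt_irrefl c ?_
  calc c ≤ dist (f x) (f y) := hfc (x, y) hxy
    _ ≤ dist (g x) (f x) + dist (g y) (f y) := by rw [hgxy]; exact dist_triangle_left _ _ _
    _ ≤ dist g f + dist g f :=
        add_le_add (ContinuousMap.dist_apply_le_dist x) (ContinuousMap.dist_apply_le_dist y)
    _ < c := by linarith

section Embedding

variable {E : Type*} [NormedAddCommGroup E] [NormedSpace ℝ E] [FiniteDimensional ℝ E]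

theorem CovDimLE.exists_approx_with_small_fibers {Y : Type*} [MetricSpace Y] [CompactSpace Y]
    {n : ℕ} (hY : CovDimLE Y n) (hE : 2 * n + 1 ≤ finrank ℝ E) (f : C(Y, E)) {η δ : ℝ} (hη : 0 < η)
    (hδ : 0 < δ) :
    ∃ g : C(Y, E), (∀ x, dist (g x) (f x) < η) ∧ ∀ x y, g x = g y → dist x y < δ := by
  set U : Y → Set Y := fun z => Metric.ball z (δ / 2) ∩ f ⁻¹' Metric.ball (f z) (η / 2)
  obtain ⟨K, ρ, hρU, hρord⟩ := hY.exists_partitionOfUnity (𝒰 := range U)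
    (forall_mem_range.mpr fun z => Metric.isOpen_ball.inter (Metric.isOpen_ball.preimage f.2))
    (eq_univ_of_forall fun x => ⟨U x, mem_range_self x, Metric.mem_ball_self (by positivity),
      Metric.mem_ball_self (by positivity)⟩)
  choose z hz using fun i => exists_range_iff.mp (hρU i)
  have hU : ∀ i x, ρ i x ≠ 0 → x ∈ U (z i) := fun i x hx => hz i (subset_tsupport _ hx)
  have hρ1 : ∀ x, ∑ i, ρ i x = 1 := fun x => by
    simpa [finsum_eq_sum_of_fintype] using ρ.sum_eq_one (mem_univ x)
  -- vertices, in general position, of a map of the nerve of the cover `tsupport ∘ ρ`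
  obtain ⟨p, hpz, hp⟩ := exists_inGeneralPosition_near (fun i => f (z i)) (half_pos hη)
  let g : C(Y, E) := ⟨fun x => ∑ i, ρ i x • p i,
    continuous_finsetSum _ fun i _ => (ρ i).continuous.smul continuous_const⟩
  refine ⟨g, fun x => ?_, fun x y hxy => ?_⟩
  · have hmem := ρ.finsum_smul_mem_convex (g := fun i _ => p i) (mem_univ x)
      (fun i hi => ?_) (convex_ball (f x) η)
    · simpa [finsum_eq_sum_of_fintype, g] using hmem
    obtain ⟨-, hfx⟩ := hU i x hi
    rw [mem_preimage, Metric.mem_ball] at hfx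
    rw [Metric.mem_ball]
    calc dist (p i) (f x) ≤ dist (p i) (f (z i)) + dist (f x) (f (z i)) := dist_triangle_right _ _ _
      _ < η / 2 + η / 2 := add_lt_add (hpz i) hfx
      _ = η := add_halves η
  · have hρxy : (ρ · x) = (ρ · y) :=
      hp.eq_of_sum_smul_eq (by linarith [hρord x, hρord y]) (by rw [hρ1, hρ1]) hxy
    obtain ⟨i, -, hi⟩ := Finset.exists_ne_zero_of_sum_ne_zero ((hρ1 x).symm ▸ one_ne_zero)
    obtain ⟨hx, -⟩ := hU i x hi
    obtain ⟨hy, -⟩ := hU i y (congrFun hρxy i ▸ hi)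
    calc dist x y ≤ dist x (z i) + dist y (z i) := dist_triangle_right _ _ _
      _ < δ / 2 + δ / 2 := add_lt_add hx hy
      _ = δ := add_halves δ

/-- The Menger–Nöbeling theorem, by Baire category in `C(Y, E)`. -/
theorem CovDimLE.exists_injective {Y : Type*} [MetricSpace Y] [CompactSpace Y] {n : ℕ}
    (hY : CovDimLE Y n) (hE : 2 * n + 1 ≤ finrank ℝ E) : ∃ h : C(Y, E), Injective h := by
  set G : ℕ → Set C(Y, E) := fun k => {f | ∀ x y, 1 / (k + 1 : ℝ) ≤ dist x y → f x ≠ f y}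
  have hGdense : ∀ k, Dense (G k) := fun k => Metric.dense_iff.mpr fun f r hr => by
    obtain ⟨g, hgf, hg⟩ :=
      hY.exists_approx_with_small_fibers hE f hr (Nat.one_div_pos_of_nat (n := k))
    exact ⟨g, (ContinuousMap.dist_lt_iff hr).mpr hgf,
      fun x y hxy hgxy => (hg x y hgxy).not_ge hxy⟩
  obtain ⟨h, hh⟩ :=
    (dense_iInter_of_isOpen_nat (fun k => isOpen_setOf_forall_le_dist_imp_ne _) hGdense).nonempty
  refine ⟨h, fun x y hxy => ?_⟩
  by_contra hne
  obtain ⟨k, hk⟩ := exists_nat_one_div_lt (dist_pos.mpr hne)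
  exact mem_iInter.mp hh k x y hk.le hxy

end Embedding

theorem exists_lipschitz_fin_le_dist_add {X : Type*} [MetricSpace X] [CompactSpace X] {ε : ℝ}
    (hε : 0 < ε) : ∃ (K : ℕ) (G : X → Fin K → ℝ), LipschitzWith 1 G ∧
      ∀ x y, dist x y ≤ dist (G x) (G y) + 2 * ε := by
  obtain ⟨t, -, ht, hcover⟩ := finite_cover_balls_of_compact (isCompact_univ (X := X)) hε
  obtain ⟨K, e, -, rfl⟩ := ht.fin_param
  refine ⟨K, fun x i => dist x (e i), LipschitzWith.of_dist_le_mul fun x y => ?_, fun x y => ?_⟩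
  · rw [NNReal.coe_one, one_mul]
    exact (dist_pi_le_iff dist_nonneg).mpr fun i => abs_dist_sub_le x y (e i)
  · obtain ⟨_, ⟨i, rfl⟩, hxi⟩ := mem_iUnion₂.mp (hcover (mem_univ x))
    have hxi : dist x (e i) < ε := hxi
    have hi := dist_le_pi_dist (fun i => dist x (e i)) (fun i => dist y (e i)) i
    rw [Real.dist_eq] at hi
    linarith [dist_triangle_right x y (e i), neg_abs_le (dist x (e i) - dist y (e i))]

theorem CovDimLE.exists_isEmbedding_abs_dist_sub_le {X : Type*} [MetricSpace X] [CompactSpace X]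
    {n : ℕ} (hX : CovDimLE X n) {ε : ℝ} (hε : 0 < ε) :
    ∃ (N : ℕ) (F : X → Fin N → ℝ), IsEmbedding F ∧
      ∀ x y, |dist (F x) (F y) - dist x y| ≤ 2 * ε := by
  obtain ⟨K, G, hGlip, hG⟩ := exists_lipschitz_fin_le_dist_add (X := X) hε
  obtain ⟨h, hinj⟩ := hX.exists_injective (E := Fin (2 * n + 1) → ℝ) (by simp)
  have hbdd := (isCompact_range h.continuous).isBounded
  set c := ε / (Metric.diam (range h) + 1)
  have hc : 0 < c := div_pos hε (by linarith [Metric.diam_nonneg (s := range h)])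
  have hch : ∀ x y, dist (c • h x) (c • h y) ≤ ε := fun x y => by
    rw [dist_smul₀, Real.norm_of_nonneg hc.le]
    calc c * dist (h x) (h y) ≤ c * (Metric.diam (range h) + 1) := by
          gcongr; linarith [Metric.dist_le_diam_of_mem hbdd (mem_range_self x) (mem_range_self y)]
      _ = ε := div_mul_cancel₀ ε (by linarith [Metric.diam_nonneg (s := range h)])
  set F : X → Fin (K + (2 * n + 1)) → ℝ := fun x => Fin.appendIsometry _ _ (G x, c • h x)
  have hFdist : ∀ x y, dist (F x) (F y) = max (dist (G x) (G y)) (dist (c • h x) (c • h y)) :=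
    fun x y => by simp only [F, IsometryEquiv.dist_eq, Prod.dist_eq]
  have hFcont : Continuous F := (Fin.appendIsometry _ _).continuous.comp
    (hGlip.continuous.prodMk (h.continuous.const_smul c))
  have hFinj : Injective F := fun x y hxy => hinj <| smul_right_injective _ hc.ne' <|
    congrArg Prod.snd ((Fin.appendIsometry _ _).injective hxy)
  refine ⟨_, F, (hFcont.isClosedEmbedding hFinj).isEmbedding, fun x y => abs_le.mpr ⟨?_, ?_⟩⟩
  · linarith [hG x y, hFdist x y ▸ le_max_left (dist (G x) (G y)) (dist (c • h x) (c • h y))]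
  · rw [hFdist, sub_le_iff_le_add]
    exact max_le ((hGlip.dist_le_mul x y).trans (by rw [NNReal.coe_one, one_mul]; linarith))
      ((hch x y).trans (by linarith [dist_nonneg (x := x) (y := y)]))

theorem isMetricOn_dist_comp {X Z : Type*} [MetricSpace Z] {F : X → Z} (hF : Injective F) :
    IsMetricOn fun x y => dist (F x) (F y) :=
  ⟨fun _ _ => dist_eq_zero.trans hF.eq_iff, fun _ _ => dist_comm _ _,
    fun _ _ _ => dist_triangle _ _ _⟩

theorem generatesTopology_dist_comp {X Z : Type*} [TopologicalSpace X] [PseudoMetricSpace Z]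
    {F : X → Z} (hF : IsInducing F) : GeneratesTopology fun x y => dist (F x) (F y) := by
  intro s
  rw [hF.isOpen_iff]
  constructor
  · rintro ⟨t, ht, rfl⟩ x hx
    obtain ⟨r, hr, hball⟩ := Metric.isOpen_iff.mp ht (F x) hx
    exact ⟨r, hr, fun y hy => hball (by rwa [Metric.mem_ball, dist_comm])⟩
  · intro hs
    choose r hr hrs using hs
    refine ⟨⋃ x : s, Metric.ball (F x) (r x x.2), isOpen_iUnion fun _ => Metric.isOpen_ball, ?_⟩
    ext y
    simp only [mem_preimage, mem_iUnion, Metric.mem_ball, Subtype.exists]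
    exact ⟨fun ⟨x, hx, hyx⟩ => hrs x hx y (by rwa [dist_comm] at hyx),
      fun hy => ⟨y, hy, by simpa using hr y hy⟩⟩

abbrev IsMetricOn.toMetricSpace {X : Type*} [TopologicalSpace X] {d : X → X → ℝ}
    (hd : IsMetricOn d) (hgen : GeneratesTopology d) : MetricSpace X :=
  MetricSpace.ofDistTopology d (fun x => (hd.1 x x).mpr rfl) hd.2.1
    (fun x y z => hd.2.2 x z y) hgen fun x y => (hd.1 x y).mp

theorem dense_isometrically_embeddable_general {X : Type*} [TopologicalSpace X] [CompactSpace X]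
    (hdim : ∃ n : ℕ, CovDimLE X n) :
    ∀ d : X → X → ℝ, IsMetricOn d → GeneratesTopology d → ∀ ε : ℝ, 0 < ε →
      ∃ D : X → X → ℝ, IsMetricOn D ∧ GeneratesTopology D ∧
        (⨆ q : X × X, ENNReal.ofReal |D q.1 q.2 - d q.1 q.2|) < ENNReal.ofReal (4 * ε) ∧
        ∃ (N : ℕ) (f : X → (Fin N → ℝ)), ∀ x y, dist (f x) (f y) = D x y := by
  obtain ⟨n, hn⟩ := hdim
  intro d hd hgen ε hε
  let := hd.toMetricSpace hgen
  obtain ⟨N, F, hF, hFd⟩ := hn.exists_isEmbedding_abs_dist_sub_le hε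
  refine ⟨fun x y => dist (F x) (F y), isMetricOn_dist_comp hF.injective,
    generatesTopology_dist_comp hF.isInducing, ?_, N, F, fun _ _ => rfl⟩
  calc (⨆ q : X × X, ENNReal.ofReal |dist (F q.1) (F q.2) - d q.1 q.2|)
      ≤ ENNReal.ofReal (2 * ε) := iSup_le fun q => ENNReal.ofReal_le_ofReal (hFd q.1 q.2)
    _ < ENNReal.ofReal (4 * ε) := (ENNReal.ofReal_lt_ofReal_iff (by positivity)).mpr (by linarith)

/-- On a compact finite-dimensional metrizable space, metrics isometrically
embeddable into some `ℝ^N` with the sup (`ℓ^∞`) metric are `𝒟_X`-dense. -/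
theorem dense_isometrically_embeddable {X : Type*} [TopologicalSpace X]
    [CompactSpace X] [TopologicalSpace.MetrizableSpace X]
    (hdim : ∃ n : ℕ, CovDimLE X n) :
    ∀ d : X → X → ℝ, IsMetricOn d → GeneratesTopology d → ∀ ε : ℝ, 0 < ε →
      ∃ D : X → X → ℝ, IsMetricOn D ∧ GeneratesTopology D ∧
        (⨆ q : X × X, ENNReal.ofReal |D q.1 q.2 - d q.1 q.2|) < ENNReal.ofReal (4 * ε) ∧
        ∃ (N : ℕ) (f : X → (Fin N → ℝ)), ∀ x y, dist (f x) (f y) = D x y :=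
  dense_isometrically_embeddable_general hdim
end

section
/- Let S ⊆ [0,∞) with 0 ∈ S be an exponential range set, i.e., there exist a ∈ (0,1) and M ∈ [1,∞) such that [M^{-1}a^n, M a^n] ∩ S ≠ ∅ for all n ≥ 0. Then there exist a' ∈ (0,1), M' ∈ [1,∞), and a strictly decreasing sequence (s(n))_{n≥0} in S with M'^{-1} a'^n ≤ s(n) ≤ M' a'^n for all n ≥ 0. -/
theorem strictAnti_of_mem_geometric_window {q M : ℝ} {s : ℕ → ℝ} (hq : 0 < q) (hM : 0 < M)
    (hqM : q < (M * M)⁻¹) (hs : ∀ n, M⁻¹ * q ^ n ≤ s n ∧ s n ≤ M * q ^ n) : StrictAnti s := by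
  refine strictAnti_nat_of_succ_lt fun n => ?_
  have hqn : 0 < q ^ n := pow_pos hq n
  calc s (n + 1) ≤ M * q ^ n * q := by rw [mul_assoc, ← pow_succ]; exact (hs (n + 1)).2
    _ < M * q ^ n * (M * M)⁻¹ := by gcongr
    _ = M⁻¹ * q ^ n := by field_simp
    _ ≤ s n := (hs n).1

theorem exponential_rangeSet_sequence_general (S : Set ℝ)
    (hexp : ∃ a : ℝ, 0 < a ∧ a < 1 ∧ ∃ M : ℝ, 1 ≤ M ∧
      ∀ n : ℕ, ∃ s ∈ S, M⁻¹ * a ^ n ≤ s ∧ s ≤ M * a ^ n) :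
    ∃ a' : ℝ, 0 < a' ∧ a' < 1 ∧ ∃ M' : ℝ, 1 ≤ M' ∧ ∃ s : ℕ → ℝ,
      StrictAnti s ∧ (∀ n, s n ∈ S) ∧
      ∀ n : ℕ, M'⁻¹ * a' ^ n ≤ s n ∧ s n ≤ M' * a' ^ n := by
  obtain ⟨a, ha0, ha1, M, hM, h⟩ := hexp
  choose t htS ht using h
  have hM0 : 0 < M := one_pos.trans_le hM
  -- Keeping every `k`-th window, with `a ^ k < M⁻²`, makes consecutive windows disjoint.
  obtain ⟨k, hk⟩ := exists_pow_lt_of_lt_one (by positivity : 0 < (M * M)⁻¹) ha1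
  have hk1 : a ^ k < 1 := hk.trans_le (inv_le_one_of_one_le₀ (one_le_mul_of_one_le_of_one_le hM hM))
  have hwindow : ∀ n, M⁻¹ * (a ^ k) ^ n ≤ t (k * n) ∧ t (k * n) ≤ M * (a ^ k) ^ n := by
    simpa only [← pow_mul] using fun n => ht (k * n)
  exact ⟨a ^ k, pow_pos ha0 k, hk1, M, hM, fun n => t (k * n),
    strictAnti_of_mem_geometric_window (pow_pos ha0 k) hM0 hk hwindow, fun n => htS _, hwindow⟩

/-- An exponential range set `S`: from geometric-scale intervals meeting `S` one can
extract a strictly decreasing geometric-like sequence inside `S`. -/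
theorem exponential_rangeSet_sequence (S : Set ℝ) (hS : S ⊆ Set.Ici 0)
    (hS0 : (0 : ℝ) ∈ S)
    (hexp : ∃ a : ℝ, 0 < a ∧ a < 1 ∧ ∃ M : ℝ, 1 ≤ M ∧
      ∀ n : ℕ, ∃ s ∈ S, M⁻¹ * a ^ n ≤ s ∧ s ≤ M * a ^ n) :
    ∃ a' : ℝ, 0 < a' ∧ a' < 1 ∧ ∃ M' : ℝ, 1 ≤ M' ∧ ∃ s : ℕ → ℝ,
      StrictAnti s ∧ (∀ n, s n ∈ S) ∧
      ∀ n : ℕ, M'⁻¹ * a' ^ n ≤ s n ∧ s n ≤ M' * a' ^ n :=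
  exponential_rangeSet_sequence_general S hexp
end

section
/- Let s : ℕ → (0,∞) be a strictly decreasing sequence tending to 0 for which there exist a ∈ (0,1) and M ∈ [1,∞) with M^{-1}a^n ≤ s(n) ≤ M a^n for all n. Let d_s be the metric on 2^ω = {0,1}^ℕ defined by d_s(x,y) = s(v(x,y)) for x ≠ y, where v(x,y) = min{n : x(n) ≠ y(n)}, and d_s(x,x)=0. Then (2^ω, d_s) is uniformly perfect; indeed it is (M^{-2}a)-uniformly perfect. -/
open Set Filter Classical
noncomputable section

/-- The first index at which two binary sequences differ. -/
noncomputable def firstDiff (x y : ℕ → Bool) : ℕ :=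
  sInf {n : ℕ | x n ≠ y n}

/-- The sequentially metrized Cantor space metric `d_s` on `2^ω`. -/
noncomputable def seqMetric (s : ℕ → ℝ) (x y : ℕ → Bool) : ℝ :=
  if x = y then 0 else s (firstDiff x y)

/-- Diameter of `2^ω` with respect to `d_s`. -/
noncomputable def seqDiam (s : ℕ → ℝ) : ℝ :=
  sSup {r : ℝ | ∃ x y : ℕ → Bool, seqMetric s x y = r}

/-!
Given `r` below the diameter `s 0`, pick the scale `k` with `s (k + 1) ≤ r < s k` and flip `x`
at coordinate `k + 1`: the resulting point is at distance exactly `s (k + 1)`. The two-sided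
geometric bounds give `s (k + 1) ≥ M⁻¹ a^(k+1) ≥ M⁻² a · s k > M⁻² a · r`.
-/

theorem firstDiff_update_not (x : ℕ → Bool) (n : ℕ) :
    firstDiff x (Function.update x n (!x n)) = n := by
  have hdiff : {m : ℕ | x m ≠ Function.update x n (!x n) m} = {n} := by
    ext m
    rcases eq_or_ne m n with rfl | hmn
    · simp
    · simp [hmn]
  rw [firstDiff, hdiff, csInf_singleton]

theorem seqMetric_update_not (s : ℕ → ℝ) (x : ℕ → Bool) (n : ℕ) :
    seqMetric s x (Function.update x n (!x n)) = s n := by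
  have hne : x ≠ Function.update x n (!x n) := fun h => by
    simpa using congrFun h n
  rw [seqMetric, if_neg hne, firstDiff_update_not]

theorem seqDiam_le_apply_zero {s : ℕ → ℝ} (hanti : Antitone s)
    (hlim : Tendsto s atTop (nhds 0)) : seqDiam s ≤ s 0 := by
  refine csSup_le ⟨0, 0, 0, if_pos rfl⟩ ?_
  rintro _ ⟨x, y, rfl⟩
  unfold seqMetric
  split_ifs
  · exact hanti.le_of_tendsto hlim 0
  · exact hanti (Nat.zero_le _)

theorem exists_apply_succ_le_lt {s : ℕ → ℝ} (hlim : Tendsto s atTop (nhds 0)) {r : ℝ}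
    (hr : 0 < r) (hr0 : r < s 0) : ∃ k, s (k + 1) ≤ r ∧ r < s k := by
  have hex : ∃ m, s m ≤ r := ((hlim.eventually_lt_const hr).exists).imp fun _ => le_of_lt
  have hfind : Nat.find hex ≠ 0 := fun h => hr0.not_ge (h ▸ Nat.find_spec hex)
  obtain ⟨k, hk⟩ := Nat.exists_eq_add_one_of_ne_zero hfind
  exact ⟨k, hk ▸ Nat.find_spec hex, not_le.1 (Nat.find_min hex (by omega))⟩

theorem inv_sq_mul_le_apply_succ {s : ℕ → ℝ} {a M : ℝ} (ha : 0 ≤ a) (hM : 0 < M)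
    (hbound : ∀ n : ℕ, M⁻¹ * a ^ n ≤ s n ∧ s n ≤ M * a ^ n) (k : ℕ) :
    (M ^ 2)⁻¹ * a * s k ≤ s (k + 1) :=
  calc (M ^ 2)⁻¹ * a * s k ≤ (M ^ 2)⁻¹ * a * (M * a ^ k) := by
        gcongr
        exact (hbound k).2
    _ = M⁻¹ * a ^ (k + 1) := by field_simp; ring
    _ ≤ s (k + 1) := (hbound (k + 1)).1

theorem seqCantor_uniformlyPerfect_general (s : ℕ → ℝ)
    (hanti : StrictAnti s) (hlim : Tendsto s atTop (nhds 0))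
    (a : ℝ) (ha0 : 0 < a) (M : ℝ) (hM : 1 ≤ M)
    (hbound : ∀ n : ℕ, M⁻¹ * a ^ n ≤ s n ∧ s n ≤ M * a ^ n) :
    ∀ x : ℕ → Bool, ∀ r : ℝ, 0 < r → r < seqDiam s →
      ∃ y : ℕ → Bool, (M ^ 2)⁻¹ * a * r ≤ seqMetric s x y ∧ seqMetric s x y ≤ r := by
  intro x r hr hrd
  have hr0 : r < s 0 := hrd.trans_le (seqDiam_le_apply_zero hanti.antitone hlim)
  obtain ⟨k, hsk, hrk⟩ := exists_apply_succ_le_lt hlim hr hr0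
  refine ⟨Function.update x (k + 1) (!x (k + 1)), ?_, ?_⟩ <;> rw [seqMetric_update_not]
  · calc (M ^ 2)⁻¹ * a * r ≤ (M ^ 2)⁻¹ * a * s k := by gcongr
      _ ≤ s (k + 1) := inv_sq_mul_le_apply_succ ha0.le (by linarith) hbound k
  · exact hsk

/-- If `M⁻¹ aⁿ ≤ s n ≤ M aⁿ` for a strictly decreasing null sequence `s`, then the
sequentially metrized Cantor space `(2^ω, d_s)` is `(M⁻² a)`-uniformly perfect. -/
theorem seqCantor_uniformlyPerfect (s : ℕ → ℝ) (hpos : ∀ n, 0 < s n)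
    (hanti : StrictAnti s) (hlim : Tendsto s atTop (nhds 0))
    (a : ℝ) (ha0 : 0 < a) (ha1 : a < 1) (M : ℝ) (hM : 1 ≤ M)
    (hbound : ∀ n : ℕ, M⁻¹ * a ^ n ≤ s n ∧ s n ≤ M * a ^ n) :
    ∀ x : ℕ → Bool, ∀ r : ℝ, 0 < r → r < seqDiam s →
      ∃ y : ℕ → Bool, (M ^ 2)⁻¹ * a * r ≤ seqMetric s x y ∧ seqMetric s x y ≤ r :=
  seqCantor_uniformlyPerfect_general s hanti hlim a ha0 M hM hbound
end
end
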